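/- arXiv:1005.3131 — 7 statements merged into one kernel-verified Lean document; each statement's English description precedes it below -/
import Mathlib

section
/- Let b2, b3, b4 be natural numbers satisfying Salamon's relation b4 + b3 = 46 + 10*b2 and Verbitsky's inequality b2*(b2+1)/2 ≤ b4. Then b2 ≤ 23; moreover, if b2 = 23 then b3 = 0 and b4 = 276. -/
/-- Numerical core of the Beauville–Guan bound for hyperkähler 4-folds:
Salamon's relation `b4 + b3 = 46 + 10*b2` together with Verbitsky's
inequality `b2*(b2+1)/2 ≤ b4` forces `b2 ≤ 23`, and in case of equality
`b3 = 0` and `b4 = 276`. -/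
theorem beauville_guan_bound (b2 b3 b4 : ℕ)
    (hSalamon : b4 + b3 = 46 + 10 * b2)
    (hVerbitsky : b2 * (b2 + 1) / 2 ≤ b4) :
    b2 ≤ 23 ∧ (b2 = 23 → b3 = 0 ∧ b4 = 276) := by
  have h2 : b2 * (b2 + 1) ≤ 2 * b4 := by
    have hd : 2 ∣ b2 * (b2 + 1) := (Nat.even_mul_succ_self b2).two_dvd
    calc b2 * (b2 + 1) = b2 * (b2 + 1) / 2 * 2 := (Nat.div_mul_cancel hd).symm
      _ ≤ b4 * 2 := Nat.mul_le_mul_right 2 hVerbitsky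
      _ = 2 * b4 := Nat.mul_comm _ _
  have hle : b2 ≤ 23 := by nlinarith
  exact ⟨hle, fun h => by subst h; omega⟩
end

section
/- Let V be a complex vector space, b : V × V → ℂ a symmetric bilinear form with associated quadratic form q(α) = b(α,α), n ≥ 1 an integer, and c ∈ ℂ. Suppose G : V^{2n} → ℂ is a multilinear map that is symmetric (invariant under all permutations of its arguments) and satisfies G(α, α, …, α) = c · ((2n)!/(n! · 2ⁿ)) · q(α)ⁿ for every α ∈ V. Then for all α₁, …, α_{2n} ∈ V one has G(α₁, …, α_{2n}) = c · Σ_σ Π_{i < σ(i)} b(α_i, α_{σ(i)}), where the sum runs over all fixed-point-free involutions σ of {1, …, 2n} (equivalently, over all perfect matchings of {1, …, 2n}) and the product runs over the pairs {i, σ(i)} of the matching. -/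
/-!
The right-hand side `c · Σ_σ ∏_{i < σ i} b(α_i, α_{σ i})` is itself a symmetric `2n`-multilinear
form: each index occurs in exactly one factor of each product, and relabelling the arguments by
`π` conjugates the matchings by `π`. On the diagonal it equals `c · N · q(α)ⁿ`, where the number
`N` of fixed-point-free involutions (the permutations of cycle type `2ⁿ`) is `(2n)!/(n!·2ⁿ)`.
So its difference with `G` is a symmetric multilinear form vanishing on the diagonal, and the
polarization identity `Σ_σ F(α ∘ σ) = Σ_s (-1)^{|sᶜ|} F(Σ_{i∈s} α_i, …, Σ_{i∈s} α_i)` shows that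
such a form is zero in characteristic zero.
-/

open Finset Function Equiv Nat

theorem Finset.prod_eq_prod_of_involutive {ι β : Type*} [CommMonoid β] {τ : ι → ι}
    (hτ : Involutive τ) {g : ι → β} (hg : ∀ i, g (τ i) = g i) {S T : Finset ι}
    (hS : ∀ i, i ∈ S ↔ τ i ∉ S) (hT : ∀ i, i ∈ T ↔ τ i ∉ T) :
    ∏ i ∈ S, g i = ∏ i ∈ T, g i := by
  classical
  refine prod_nbij' (fun i => if i ∈ T then i else τ i) (fun j => if j ∈ S then j else τ j)
    ?_ ?_ ?_ ?_ ?_ <;> intro i hi <;> grind [Involutive]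

theorem Finset.two_mul_card_eq_card_of_involutive {ι : Type*} [Fintype ι] {τ : ι → ι}
    (hτ : Involutive τ) {S : Finset ι} (hS : ∀ i, i ∈ S ↔ τ i ∉ S) :
    2 * #S = Fintype.card ι := by
  classical
  have h : #Sᶜ = #S := card_nbij' τ τ (fun i hi => by grind [Involutive, Finset.mem_compl])
    (fun i hi => by grind [Involutive, Finset.mem_compl]) (fun i _ => hτ i) (fun i _ => hτ i)
  rw [← card_add_card_compl S, h, two_mul]

theorem Finset.sum_superset_neg_one_pow_card_compl {ι : Type*} [Fintype ι] [DecidableEq ι]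
    (T : Finset ι) :
    ∑ s with T ⊆ s, (-1 : ℤ) ^ #sᶜ = if T = univ then 1 else 0 := by
  have h : ∑ s with T ⊆ s, (-1 : ℤ) ^ #sᶜ = ∑ t ∈ Tᶜ.powerset, (-1 : ℤ) ^ #t :=
    sum_nbij' compl compl (by simp) (by simp [subset_compl_comm])
      (fun _ _ => compl_compl _) (fun _ _ => compl_compl _) (fun _ _ => rfl)
  simp_rw [h, sum_powerset_neg_one_pow_card, compl_eq_empty_iff]

namespace MultilinearMap

variable {R M N ι : Type*} [Semiring R] [AddCommMonoid M] [Module R M] [AddCommGroup N]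
  [Module R N] [Fintype ι] [DecidableEq ι]

theorem sum_perm_eq_sum_neg_one_pow_smul (F : MultilinearMap R (fun _ : ι => M) N)
    (α : ι → M) :
    ∑ σ : Perm ι, F (α ∘ σ) = ∑ s : Finset ι, (-1 : ℤ) ^ #sᶜ • F (fun _ => ∑ i ∈ s, α i) := by
  have h_surj : ∑ σ : Perm ι, F (α ∘ σ) = ∑ r : ι → ι with Surjective r, F (α ∘ r) :=
    sum_bij (fun σ _ => ⇑σ) (by simp [Equiv.surjective])
      (fun _ _ _ _ h => DFunLike.coe_injective h)
      (fun r hr => ⟨Equiv.ofBijective r (mem_filter.1 hr).2.bijective_of_finite, by simp, rfl⟩)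
      (fun _ _ => rfl)
  calc ∑ σ : Perm ι, F (α ∘ σ)
      = ∑ r : ι → ι, (∑ s with univ.image r ⊆ s, (-1 : ℤ) ^ #sᶜ) • F (α ∘ r) := by
        rw [h_surj, sum_filter]
        refine sum_congr rfl fun r _ => ?_
        rw [sum_superset_neg_one_pow_card_compl, ite_smul, one_smul, zero_smul]
        exact if_congr (by simp [eq_univ_iff_forall, Surjective]) rfl rfl
    _ = ∑ s : Finset ι, ∑ r ∈ Fintype.piFinset (fun _ => s), (-1 : ℤ) ^ #sᶜ • F (α ∘ r) := by
        simp_rw [sum_smul]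
        exact sum_comm' (by simp [image_subset_iff, Fintype.mem_piFinset])
    _ = _ := by
        simp_rw [← smul_sum, F.map_sum_finset]
        rfl

theorem eq_zero_of_symmetric_of_apply_const_eq_zero [IsAddTorsionFree N]
    (F : MultilinearMap R (fun _ : ι => M) N) (hsym : ∀ (σ : Perm ι) α, F (α ∘ σ) = F α)
    (hdiag : ∀ x, F (fun _ => x) = 0) : F = 0 := by
  ext α
  have h := F.sum_perm_eq_sum_neg_one_pow_smul α
  simp only [hsym, hdiag, smul_zero, sum_const_zero, sum_const, Finset.card_univ,
    Fintype.card_perm] at h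
  exact (smul_eq_zero.1 h).resolve_left (Nat.factorial_ne_zero _)

end MultilinearMap

namespace Equiv.Perm

section

variable {ι : Type*} [Fintype ι] [DecidableEq ι]

variable (ι) in
def fixedPointFreeInvolutions : Finset (Perm ι) := {σ | σ * σ = 1 ∧ ∀ i, σ i ≠ i}

theorem cycleType_eq_replicate_two_iff {n : ℕ} (hι : Fintype.card ι = 2 * n) {σ : Perm ι} :
    σ.cycleType = Multiset.replicate n 2 ↔ σ * σ = 1 ∧ ∀ i, σ i ≠ i := by
  have h_inv : σ * σ = 1 ↔ ∀ k ∈ σ.cycleType, k ∣ 2 := by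
    rw [← sq, ← orderOf_dvd_iff_pow_eq_one, ← lcm_cycleType, Multiset.lcm_dvd]
  have h_fpf : (∀ i, σ i ≠ i) ↔ σ.cycleType.sum = 2 * n := by
    rw [sum_cycleType, ← hι, card_eq_iff_eq_univ, eq_univ_iff_forall]
    simp
  rw [h_inv, h_fpf]
  constructor
  · rintro h
    simp [h, Multiset.mem_replicate, mul_comm]
  · rintro ⟨h_dvd, h_sum⟩
    have h_two : ∀ k ∈ σ.cycleType, k = 2 := fun k hk =>
      le_antisymm (Nat.le_of_dvd two_pos (h_dvd k hk)) (two_le_of_mem_cycleType hk)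
    rw [Multiset.eq_replicate_of_mem h_two] at h_sum ⊢
    simp only [Multiset.sum_replicate, smul_eq_mul] at h_sum
    congr 1
    omega

theorem card_fixedPointFreeInvolutions_mul {n : ℕ} (hι : Fintype.card ι = 2 * n) :
    #(fixedPointFreeInvolutions ι) * (2 ^ n * n !) = (2 * n)! := by
  have h_prod :
      ∏ k ∈ (Multiset.replicate n 2).toFinset, ((Multiset.replicate n 2).count k)! = n ! := by
    rcases eq_or_ne n 0 with rfl | hn <;> simp [Multiset.toFinset_replicate, *]
  have h := card_of_cycleType_mul_eq ι (Multiset.replicate n 2)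
  simp_rw [cycleType_eq_replicate_two_iff hι, h_prod, Multiset.sum_replicate,
    Multiset.prod_replicate, hι] at h
  simpa [fixedPointFreeInvolutions, Multiset.mem_replicate, mul_comm] using h

theorem mem_fixedPointFreeInvolutions {σ : Perm ι} :
    σ ∈ fixedPointFreeInvolutions ι ↔ σ * σ = 1 ∧ ∀ i, σ i ≠ i := by
  simp [fixedPointFreeInvolutions]

theorem involutive_of_mem_fixedPointFreeInvolutions {σ : Perm ι}
    (hσ : σ ∈ fixedPointFreeInvolutions ι) : Involutive σ := fun i => by
  simpa using congr($((mem_fixedPointFreeInvolutions.1 hσ).1) i)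

theorem conj_mem_fixedPointFreeInvolutions {σ : Perm ι} (hσ : σ ∈ fixedPointFreeInvolutions ι)
    (π : Perm ι) : π * σ * π⁻¹ ∈ fixedPointFreeInvolutions ι := by
  rw [mem_fixedPointFreeInvolutions] at hσ ⊢
  refine ⟨by simp [mul_assoc, ← mul_assoc σ σ, hσ.1], fun i h => hσ.2 (π⁻¹ i) ?_⟩
  simpa [← Equiv.eq_symm_apply] using h

end

section Pairing

variable {R M ι : Type*} [CommSemiring R] [AddCommMonoid M] [Module R M] [Fintype ι]
  [LinearOrder ι] {σ : Perm ι}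

/-- The term of the perfect matching `{{i, σ i}}`, each pair listed once through its smaller end. -/
def pairingProd (b : M →ₗ[R] M →ₗ[R] R) (σ : Perm ι) (α : ι → M) : R :=
  ∏ i with i < σ i, b (α i) (α (σ i))

theorem mem_filter_lt_apply_iff (hσ : σ ∈ fixedPointFreeInvolutions ι) (i : ι) :
    i ∈ ({i | i < σ i} : Finset ι) ↔ σ i ∉ ({i | i < σ i} : Finset ι) := by
  simp [involutive_of_mem_fixedPointFreeInvolutions hσ i, lt_iff_le_and_ne,
    (mem_fixedPointFreeInvolutions.1 hσ).2 i]

theorem pairingProd_const (hσ : σ ∈ fixedPointFreeInvolutions ι) {n : ℕ}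
    (hι : Fintype.card ι = 2 * n) (b : M →ₗ[R] M →ₗ[R] R) (x : M) :
    pairingProd b σ (fun _ => x) = b x x ^ n := by
  have h := two_mul_card_eq_card_of_involutive (involutive_of_mem_fixedPointFreeInvolutions hσ)
    (mem_filter_lt_apply_iff hσ)
  rw [pairingProd, prod_const]
  congr
  omega

theorem pairingProd_comp (hσ : σ ∈ fixedPointFreeInvolutions ι) {b : M →ₗ[R] M →ₗ[R] R}
    (hb : ∀ x y, b x y = b y x) (π : Perm ι) (α : ι → M) :
    pairingProd b σ (α ∘ π) = pairingProd b (π * σ * π⁻¹) α := by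
  set τ := π * σ * π⁻¹
  have hτ : τ ∈ fixedPointFreeInvolutions ι := conj_mem_fixedPointFreeInvolutions hσ π
  have hτ_inv := involutive_of_mem_fixedPointFreeInvolutions hτ
  have h_comp : ∀ i, τ (π i) = π (σ i) := by simp [τ]
  calc pairingProd b σ (α ∘ π)
      = ∏ j ∈ ({i | i < σ i} : Finset ι).map π.toEmbedding, b (α j) (α (τ j)) := by
        simp [pairingProd, h_comp]
    _ = pairingProd b τ α := by
        refine prod_eq_prod_of_involutive hτ_inv (fun j => by rw [hτ_inv j, hb]) (fun j => ?_)
          (mem_filter_lt_apply_iff hτ)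
        have h_inv_comp : π.symm (τ j) = σ (π.symm j) := by simp [τ]
        simpa [h_inv_comp] using mem_filter_lt_apply_iff hσ (π⁻¹ j)

theorem exists_pairingProd_update_eq_mul (hσ : σ ∈ fixedPointFreeInvolutions ι)
    (b : M →ₗ[R] M →ₗ[R] R) (α : ι → M) (j : ι) :
    ∃ (c : R) (ℓ : M →ₗ[R] R), ∀ v, pairingProd b σ (update α j v) = c * ℓ v := by
  have hσ_inv : ∀ i, σ (σ i) = i := involutive_of_mem_fixedPointFreeInvolutions hσ
  have hσ_ne := (mem_fixedPointFreeInvolutions.1 hσ).2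
  set P : Finset ι := {i | i < σ i}
  have hP := mem_filter_lt_apply_iff hσ
  obtain ⟨i₀, hi₀, hj⟩ : ∃ i₀ ∈ P, j = i₀ ∨ j = σ i₀ := by
    by_cases hj : j ∈ P
    · exact ⟨j, hj, .inl rfl⟩
    · exact ⟨σ j, by rwa [hP, hσ_inv], .inr (hσ_inv j).symm⟩
  have h_away : ∀ i ∈ P.erase i₀, i ≠ j ∧ σ i ≠ j := by
    intro i hi
    rw [mem_erase] at hi
    grind
  refine ⟨∏ i ∈ P.erase i₀, b (α i) (α (σ i)),
    if j = i₀ then b.flip (α (σ i₀)) else b (α i₀), fun v => ?_⟩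
  rw [pairingProd, ← mul_prod_erase P _ hi₀, mul_comm, prod_congr rfl fun i hi => by
    rw [update_of_ne (h_away i hi).1, update_of_ne (h_away i hi).2]]
  congr 1
  rcases hj with rfl | rfl
  · simp [hσ_ne]
  · simp [hσ_ne i₀, update_of_ne (hσ_ne i₀).symm]

end Pairing

end Equiv.Perm

namespace LinearMap

open Equiv.Perm

variable {R M ι : Type*} [CommSemiring R] [AddCommMonoid M] [Module R M] [Fintype ι]
  [LinearOrder ι]

variable (ι) in
def matchingForm (b : M →ₗ[R] M →ₗ[R] R) : MultilinearMap R (fun _ : ι => M) R :=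
  MultilinearMap.mk' (fun α => ∑ σ ∈ fixedPointFreeInvolutions ι, pairingProd b σ α)
    (fun α j x y => by
      rw [← sum_add_distrib]
      refine sum_congr rfl fun σ hσ => ?_
      obtain ⟨c, ℓ, h⟩ := exists_pairingProd_update_eq_mul hσ b α j
      simp [h, mul_add])
    (fun α j r x => by
      rw [smul_sum]
      refine sum_congr rfl fun σ hσ => ?_
      obtain ⟨c, ℓ, h⟩ := exists_pairingProd_update_eq_mul hσ b α j
      simp [h, mul_left_comm])

theorem matchingForm_apply (b : M →ₗ[R] M →ₗ[R] R) (α : ι → M) :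
    b.matchingForm ι α = ∑ σ ∈ fixedPointFreeInvolutions ι, pairingProd b σ α :=
  rfl

theorem matchingForm_comp {b : M →ₗ[R] M →ₗ[R] R} (hb : ∀ x y, b x y = b y x) (π : Perm ι)
    (α : ι → M) : b.matchingForm ι (α ∘ π) = b.matchingForm ι α := by
  refine sum_nbij' (fun σ => π * σ * π⁻¹) (fun σ => π⁻¹ * σ * π)
    (fun σ hσ => conj_mem_fixedPointFreeInvolutions hσ π)
    (fun σ hσ => by simpa using conj_mem_fixedPointFreeInvolutions hσ π⁻¹)
    (fun σ _ => by group) (fun σ _ => by group)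
    (fun σ hσ => pairingProd_comp hσ hb π α)

theorem matchingForm_const {n : ℕ} (hι : Fintype.card ι = 2 * n) (b : M →ₗ[R] M →ₗ[R] R)
    (x : M) : b.matchingForm ι (fun _ => x) = #(fixedPointFreeInvolutions ι) * b x x ^ n := by
  rw [matchingForm_apply, sum_congr rfl fun σ hσ => pairingProd_const hσ hι b x, sum_const,
    nsmul_eq_mul]

end LinearMap

open Equiv.Perm

open scoped Classical in
theorem fujiki_polarization_general (V : Type*) [AddCommGroup V] [Module ℂ V]
    (b : V →ₗ[ℂ] V →ₗ[ℂ] ℂ) (hb : ∀ x y : V, b x y = b y x)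
    (n : ℕ) (c : ℂ)
    (G : MultilinearMap ℂ (fun _ : Fin (2 * n) => V) ℂ)
    (hsym : ∀ (σ : Equiv.Perm (Fin (2 * n))) (α : Fin (2 * n) → V),
      G (α ∘ σ) = G α)
    (hdiag : ∀ α : V,
      G (fun _ => α)
        = c * ((Nat.factorial (2 * n) : ℂ) / ((Nat.factorial n : ℂ) * 2 ^ n))
            * (b α α) ^ n) :
    ∀ α : Fin (2 * n) → V,
      G α = c * ∑ σ ∈ Finset.univ.filter
          (fun σ : Equiv.Perm (Fin (2 * n)) => σ * σ = 1 ∧ ∀ i, σ i ≠ i),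
        ∏ i ∈ Finset.univ.filter (fun i : Fin (2 * n) => i < σ i),
          b (α i) (α (σ i)) := by
  have h_card : (#(fixedPointFreeInvolutions (Fin (2 * n))) : ℂ) = (2 * n)! / (n ! * 2 ^ n) := by
    rw [eq_div_iff (by simp [Nat.factorial_ne_zero]), mul_comm (n ! : ℂ)]
    exact_mod_cast card_fixedPointFreeInvolutions_mul (Fintype.card_fin _)
  have h_eq : G = c • b.matchingForm (Fin (2 * n)) := by
    rw [← sub_eq_zero]
    refine MultilinearMap.eq_zero_of_symmetric_of_apply_const_eq_zero _
      (fun π α => ?_) (fun x => ?_)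
    · simp [hsym, LinearMap.matchingForm_comp hb]
    · simp [hdiag, LinearMap.matchingForm_const (Fintype.card_fin _), h_card]
      ring
  intro α
  rw [h_eq, smul_apply, smul_eq_mul, LinearMap.matchingForm_apply, fixedPointFreeInvolutions]
  -- the two sides differ only in their `Decidable` instances
  congr! 3

open scoped Classical in
/-- Polarization of the Fujiki relation: if a symmetric `2n`-multilinear map `G`
on a complex vector space `V` satisfies `G(α,…,α) = c·((2n)!/(n!·2ⁿ))·q(α)ⁿ`
for every `α`, where `q(α) = b(α,α)` for a symmetric bilinear form `b`, then
`G(α₁,…,α_{2n}) = c · Σ_σ Π_{i < σ(i)} b(α_i, α_{σ(i)})`, the sum running over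
all fixed-point-free involutions `σ` of `{1,…,2n}` (perfect matchings). -/
theorem fujiki_polarization (V : Type*) [AddCommGroup V] [Module ℂ V]
    (b : V →ₗ[ℂ] V →ₗ[ℂ] ℂ) (hb : ∀ x y : V, b x y = b y x)
    (n : ℕ) (hn : 1 ≤ n) (c : ℂ)
    (G : MultilinearMap ℂ (fun _ : Fin (2 * n) => V) ℂ)
    (hsym : ∀ (σ : Equiv.Perm (Fin (2 * n))) (α : Fin (2 * n) → V),
      G (α ∘ σ) = G α)
    (hdiag : ∀ α : V,
      G (fun _ => α)
        = c * ((Nat.factorial (2 * n) : ℂ) / ((Nat.factorial n : ℂ) * 2 ^ n))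
            * (b α α) ^ n) :
    ∀ α : Fin (2 * n) → V,
      G α = c * ∑ σ ∈ Finset.univ.filter
          (fun σ : Equiv.Perm (Fin (2 * n)) => σ * σ = 1 ∧ ∀ i, σ i ≠ i),
        ∏ i ∈ Finset.univ.filter (fun i : Fin (2 * n) => i < σ i),
          b (α i) (α (σ i)) :=
  fujiki_polarization_general V b hb n c G hsym hdiag
end

section
/- Let F, G be homogeneous polynomials in ℂ[x₁, …, x_m] with F irreducible and G of degree 2n (n ≥ 1). Suppose that every iterated partial derivative of G of order at most n−1 (including G itself) vanishes at every point of the zero locus V(F) = {x ∈ ℂ^m : F(x) = 0}. Then Fⁿ divides G. Moreover, if G ≠ 0 and deg F ≥ 2, then deg F = 2 and G = c·Fⁿ for some nonzero constant c ∈ ℂ. -/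
/-!
Since `F` is homogeneous of positive degree, Euler's identity `∑ Xᵢ ∂ᵢF = (deg F) F` shows that
some `∂ᵢF` is nonzero, and having smaller degree it is not divisible by `F`. By the
Nullstellensatz, a polynomial vanishing on `V(F)` is divisible by `F`. Induction on `n` then
gives `Fⁿ ∣ G`: if `F^(k+1)` divides both `G = F^(k+1) H` and
`∂ᵢG = (k+1) F^k ∂ᵢF H + F^(k+1) ∂ᵢH`, then `F ∣ (k+1) ∂ᵢF H`, so `F ∣ H`.
Finally `G = Fⁿ H` with `deg G = 2n ≤ n deg F` forces `deg H = 0` and `deg F = 2`.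
-/

theorem Derivation.pow_succ_dvd_of_pow_dvd {R A : Type*} [CommSemiring R] [CommRing A]
    [IsDomain A] [Algebra R A] (D : Derivation R A A) {p a : A} {k : ℕ} (hp : Prime p)
    (hDp : ¬ p ∣ D p) (hk : ¬ p ∣ ((k + 1 : ℕ) : A))
    (ha : p ^ (k + 1) ∣ a) (hDa : p ^ (k + 1) ∣ D a) : p ^ (k + 2) ∣ a := by
  obtain ⟨b, rfl⟩ := ha
  have hD : D (p ^ (k + 1) * b) = p ^ k * ((k + 1 : ℕ) * D p * b) + p ^ (k + 1) * D b := by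
    rw [Derivation.leibniz, Derivation.leibniz_pow, Nat.add_sub_cancel, nsmul_eq_mul,
      smul_eq_mul, smul_eq_mul]
    ring
  rw [hD, dvd_add_left (dvd_mul_right _ _), pow_succ,
    mul_dvd_mul_iff_left (pow_ne_zero k hp.ne_zero)] at hDa
  have hpb : p ∣ b := by
    rcases hp.dvd_or_dvd hDa with h | h
    · exact absurd h (by simpa [hp.dvd_mul, hDp] using hk)
    · exact h
  exact pow_succ p (k + 1) ▸ mul_dvd_mul_left _ hpb

namespace MvPolynomial

variable {σ R : Type*}

theorem dvd_of_forall_eval_eq_zero {K : Type*} [Field K] [IsAlgClosed K] [Finite σ]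
    {F p : MvPolynomial σ K} (hF : Prime F) (h : ∀ x, eval x F = 0 → eval x p = 0) :
    F ∣ p := by
  have : (Ideal.span {F}).IsPrime := (Ideal.span_singleton_prime hF.ne_zero).mpr hF
  rw [← Ideal.mem_span_singleton, ← IsPrime.vanishingIdeal_zeroLocus (K := K) (Ideal.span {F}),
    mem_vanishingIdeal_iff]
  exact fun x hx => h x ((mem_zeroLocus_iff.mp hx) F (Ideal.mem_span_singleton_self F))

theorem IsHomogeneous.pos_of_irreducible {K : Type*} [Field K] {F : MvPolynomial σ K} {d : ℕ}
    (hF : F.IsHomogeneous d) (hirr : Irreducible F) : 0 < d := by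
  refine Nat.pos_of_ne_zero fun hd => hirr.not_isUnit ?_
  subst hd
  rw [← totalDegree_zero_iff_isHomogeneous, totalDegree_eq_zero_iff_eq_C] at hF
  rw [hF] at hirr ⊢
  exact (isUnit_iff_ne_zero.mpr fun h => hirr.ne_zero (by rw [h, map_zero])).map C

theorem IsHomogeneous.exists_not_dvd_pderiv [CommRing R] [IsDomain R] [CharZero R] [Fintype σ]
    {F : MvPolynomial σ R} {d : ℕ} (hF : F.IsHomogeneous d) (hF0 : F ≠ 0) (hd : 0 < d) :
    ∃ i, ¬ F ∣ pderiv i F := by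
  by_contra! hdvd
  have hpderiv : ∀ i, pderiv i F = 0 := fun i => by
    by_contra hne
    have hle := totalDegree_le_of_dvd_of_isDomain (hdvd i) hne
    have hlt := (hF.pderiv (i := i)).totalDegree_le
    rw [hF.totalDegree hF0] at hle
    omega
  have hEuler := hF.sum_X_mul_pderiv
  simp only [hpderiv, mul_zero, Finset.sum_const_zero] at hEuler
  exact hd.ne' (by simpa [hF0] using hEuler.symm)

theorem IsHomogeneous.eq_C_mul_of_dvd [CommRing R] [IsDomain R] {F G : MvPolynomial σ R}
    {d e : ℕ} (hF : F.IsHomogeneous d) (hG : G.IsHomogeneous e) (hG0 : G ≠ 0) (hFG : F ∣ G)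
    (hed : e ≤ d) : e = d ∧ ∃ c : R, c ≠ 0 ∧ G = C c * F := by
  obtain ⟨H, rfl⟩ := hFG
  have hF0 : F ≠ 0 := left_ne_zero_of_mul hG0
  have hH0 : H ≠ 0 := right_ne_zero_of_mul hG0
  have hdeg := hG.totalDegree hG0
  rw [totalDegree_mul_of_isDomain hF0 hH0, hF.totalDegree hF0] at hdeg
  have hH : H = C (coeff 0 H) := totalDegree_eq_zero_iff_eq_C.mp (by omega)
  refine ⟨by omega, coeff 0 H, fun h => hH0 (by rw [hH, h, map_zero]), ?_⟩
  rw [mul_comm, ← hH]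

variable {K : Type*} [Field K]

def DerivsVanishOnZeroLocus (F G : MvPolynomial σ K) (n : ℕ) : Prop :=
  ∀ L : List σ, L.length < n →
    ∀ x : σ → K, eval x F = 0 → eval x (L.foldr (fun i p => pderiv i p) G) = 0

namespace DerivsVanishOnZeroLocus

variable {F G : MvPolynomial σ K} {n : ℕ}

theorem mono {m : ℕ} (h : DerivsVanishOnZeroLocus F G n) (hmn : m ≤ n) :
    DerivsVanishOnZeroLocus F G m :=
  fun L hL => h L (by omega)

theorem pderiv (h : DerivsVanishOnZeroLocus F G (n + 1)) (i : σ) :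
    DerivsVanishOnZeroLocus F (MvPolynomial.pderiv i G) n := fun L hL x hx => by
  simpa using h (L ++ [i]) (by simpa using hL) x hx

theorem pow_dvd [IsAlgClosed K] [CharZero K] [Finite σ] (hF : Prime F) {i : σ}
    (hi : ¬ F ∣ MvPolynomial.pderiv i F) (h : DerivsVanishOnZeroLocus F G n) : F ^ n ∣ G := by
  induction n using Nat.twoStepInduction generalizing G with
  | zero => simp
  | one => simpa using dvd_of_forall_eval_eq_zero hF (h [] Nat.one_pos)
  | more k _ ih =>
    have hk : ¬ F ∣ ((k + 1 : ℕ) : MvPolynomial σ K) := fun hdvd =>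
      hF.not_isUnit (isUnit_of_dvd_unit hdvd (by
        rw [← map_natCast C]
        exact (isUnit_iff_ne_zero.mpr (Nat.cast_ne_zero.mpr k.succ_ne_zero)).map C))
    have h1 : F ^ (k + 1) ∣ G := ih (h.mono (by omega))
    have h2 : F ^ (k + 1) ∣ MvPolynomial.pderiv i G := ih (h.pderiv i)
    exact Derivation.pow_succ_dvd_of_pow_dvd (MvPolynomial.pderiv i) hF hi hk h1 h2

end DerivsVanishOnZeroLocus

end MvPolynomial

/-- The algebraic step in the Beauville–Fujiki proof of existence of the
Beauville–Bogomolov form: if `F` is an irreducible homogeneous polynomial and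
`G` is homogeneous of degree `2n` (`n ≥ 1`) such that every iterated partial
derivative of `G` of order at most `n-1` (including `G` itself) vanishes on the
zero locus of `F`, then `Fⁿ ∣ G`; moreover if `G ≠ 0` and `deg F ≥ 2` then
`deg F = 2` and `G = c·Fⁿ` for some nonzero constant `c`. -/
theorem vanishing_derivatives_power (m n : ℕ) (hn : 1 ≤ n)
    (F G : MvPolynomial (Fin m) ℂ) (dF : ℕ)
    (hFirr : Irreducible F) (hFhom : F.IsHomogeneous dF)
    (hGhom : G.IsHomogeneous (2 * n))
    (hvan : ∀ L : List (Fin m), L.length ≤ n - 1 →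
      ∀ x : Fin m → ℂ, MvPolynomial.eval x F = 0 →
        MvPolynomial.eval x (L.foldr (fun i p => MvPolynomial.pderiv i p) G) = 0) :
    F ^ n ∣ G ∧
      (G ≠ 0 → 2 ≤ dF →
        dF = 2 ∧ ∃ c : ℂ, c ≠ 0 ∧ G = MvPolynomial.C c * F ^ n) := by
  obtain ⟨i, hi⟩ := hFhom.exists_not_dvd_pderiv hFirr.ne_zero (hFhom.pos_of_irreducible hFirr)
  have hdvd : F ^ n ∣ G :=
    MvPolynomial.DerivsVanishOnZeroLocus.pow_dvd hFirr.prime hi fun L hL => hvan L (by omega)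
  refine ⟨hdvd, fun hG0 hdF => ?_⟩
  obtain ⟨hdeg, c, hc, hGc⟩ :=
    (hFhom.pow n).eq_C_mul_of_dvd hGhom hG0 hdvd (Nat.mul_le_mul_right n hdF)
  exact ⟨Nat.eq_of_mul_eq_mul_right hn hdeg.symm, c, hc, hGc⟩
end

section
/- Let V be a 6-dimensional complex vector space, vol : ⋀⁶V → ℂ a fixed linear isomorphism, and (α, β)_V := vol(α ∧ β) the induced symplectic form on ⋀³V. For every nonzero v ∈ V, the subspace F_v := {α ∈ ⋀³V : v ∧ α = 0} satisfies: (α, β)_V = 0 for all α, β ∈ F_v, and dim F_v = 10. In other words, F_v is a Lagrangian subspace of the 20-dimensional symplectic vector space ⋀³V. -/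
/-- The `k`-th exterior power of `V`, realized as a submodule of the exterior
algebra of `V`. -/
noncomputable def extPow (V : Type*) [AddCommGroup V] [Module ℂ V] (k : ℕ) :
    Submodule ℂ (ExteriorAlgebra ℂ V) :=
  LinearMap.range (ExteriorAlgebra.ι ℂ : V →ₗ[ℂ] ExteriorAlgebra ℂ V) ^ k

/-- Given a linear functional `vol` on `⋀⁶V`, the pairing `(α, β) ↦ vol (α ∧ β)`
on `⋀³V`. -/
noncomputable def wedgeForm (V : Type*) [AddCommGroup V] [Module ℂ V]
    (vol : (extPow V 6) →ₗ[ℂ] ℂ) (α β : ExteriorAlgebra ℂ V)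
    (hα : α ∈ extPow V 3) (hβ : β ∈ extPow V 3) : ℂ :=
  vol ⟨α * β, by
    have h : extPow V 6 = extPow V 3 * extPow V 3 := by
      unfold extPow
      rw [show (6 : ℕ) = 3 + 3 from rfl, pow_add]
    rw [h]
    exact Submodule.mul_mem_mul hα hβ⟩

/-- `F_v := {α ∈ ⋀³V : v ∧ α = 0}`, as a submodule of the exterior algebra. -/
noncomputable def Fv (V : Type*) [AddCommGroup V] [Module ℂ V] (v : V) :
    Submodule ℂ (ExteriorAlgebra ℂ V) :=
  extPow V 3 ⊓ LinearMap.ker (LinearMap.mulLeft ℂ (ExteriorAlgebra.ι ℂ v))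

/-!
Extend `v` to a basis `e` of `V` with `v = eᵢ`, and use the induced monomial basis `e_S`
(`S` a finset of indices) of the exterior algebra. Left multiplication by `v` kills `e_S` when
`i ∈ S` and sends it to `±e_{S ∪ {i}}` otherwise, injectively in `S`; hence its kernel is
spanned by the `e_S` with `i ∈ S`. Two such monomials share the factor `v`, so the kernel
squares to zero, which gives isotropy; in degree 3 the kernel has the basis `e_S` with `i ∈ S`,
`|S| = 3`, and there are `C(5, 2) = 10` such `S`.
-/

open ExteriorAlgebra Module Submodule

lemma Module.Basis.exists_fin_apply_eq {K V : Type*} [DivisionRing K] [AddCommGroup V]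
    [Module K V] [FiniteDimensional K V] {n : ℕ} (hn : finrank K V = n) {v : V} (hv : v ≠ 0) :
    ∃ (b : Basis (Fin n) K V) (i : Fin n), b i = v := by
  have hs : LinearIndepOn K id ({v} : Set V) := .singleton hv
  let e := (Basis.extend hs).indexEquiv (finBasisOfFinrankEq K V hn)
  exact ⟨(Basis.extend hs).reindex e, e ⟨v, hs.subset_extend _ rfl⟩, by simp⟩

lemma Module.Basis.finrank_span_image {K V ι : Type*} [DivisionRing K] [AddCommGroup V]
    [Module K V] (b : Basis ι K V) (s : Finset ι) :
    finrank K (span K (b '' s)) = s.card := by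
  rw [Set.image_eq_range]
  simpa [Function.comp_def] using
    finrank_span_eq_card (b.linearIndependent.comp ((↑) : s → ι) Subtype.val_injective)

namespace ExteriorAlgebra

open Set.powersetCard

variable {R M I : Type*} [CommRing R] [AddCommGroup M] [Module R M] [LinearOrder I]
  (b : Basis I R M)

lemma basis_singleton (i : I) : b.ExteriorAlgebra {i} = ι R (b i) := by
  simp [basis_apply_ofCard b (Finset.card_singleton i), ofFinEmbEquiv_symm_apply]

lemma span_basis_image_card_eq (n : ℕ) :
    span R (b.ExteriorAlgebra '' {s | s.card = n}) = ⋀[R]^n M := by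
  rw [← exteriorPower.ιMulti_family_span_fixedDegree_of_span R b.span_eq]
  congr 1
  ext x
  constructor
  · rintro ⟨s, hs, rfl⟩
    exact ⟨ofCard hs, (basis_apply_ofCard b hs).symm⟩
  · rintro ⟨s, rfl⟩
    exact ⟨s, s.prop, basis_apply_powersetCard b s⟩

lemma ι_mul_basis_of_mem {i : I} {s : Finset I} (h : i ∈ s) :
    ι R (b i) * b.ExteriorAlgebra s = 0 := by
  rw [← basis_singleton]
  exact basis_mul_of_not_disjoint b (ofCard (Finset.card_singleton i)) (ofCard (s := s) rfl)
    (Finset.not_disjoint_iff.mpr ⟨i, Finset.mem_singleton_self i, h⟩)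

lemma ι_mul_basis_of_notMem {i : I} {s : Finset I} (h : i ∉ s) :
    ∃ ε : ℤˣ, ι R (b i) * b.ExteriorAlgebra s = ε • b.ExteriorAlgebra (insert i s) := by
  have hdisj : Disjoint (ofCard (Finset.card_singleton i)).val (ofCard (s := s) rfl).val :=
    Finset.disjoint_singleton_left.mpr h
  refine ⟨(permOfDisjoint hdisj).sign, ?_⟩
  rw [← basis_singleton]
  refine (basis_mul_of_disjoint b _ _ hdisj).trans ?_
  simp [coe_disjUnion]

lemma coord_insert_comp_mulLeft_ι {i : I} {s : Finset I} (h : i ∉ s) :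
    ∃ ε : ℤˣ, b.ExteriorAlgebra.coord (insert i s) ∘ₗ LinearMap.mulLeft R (ι R (b i)) =
      ε • b.ExteriorAlgebra.coord s := by
  obtain ⟨ε, hε⟩ := ι_mul_basis_of_notMem b h
  refine ⟨ε, b.ExteriorAlgebra.ext fun t => ?_⟩
  by_cases hts : t = s
  · subst hts
    simp [hε]
  by_cases hit : i ∈ t
  · simp [ι_mul_basis_of_mem b hit, hts]
  · obtain ⟨ε', hε'⟩ := ι_mul_basis_of_notMem b hit
    have hins : insert i t ≠ insert i s := fun he =>
      hts (by rw [← Finset.erase_insert hit, he, Finset.erase_insert h])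
    simp [hε', hts, hins]

lemma ker_mulLeft_ι_basis (i : I) :
    LinearMap.ker (LinearMap.mulLeft R (ι R (b i))) =
      span R (b.ExteriorAlgebra '' {s | i ∈ s}) := by
  refine le_antisymm (fun x hx => ?_) (span_le.mpr ?_)
  · rw [b.ExteriorAlgebra.mem_span_image]
    intro s hs
    by_contra h
    obtain ⟨ε, hε⟩ := coord_insert_comp_mulLeft_ι b h
    have hcoeff := LinearMap.congr_fun hε x
    rw [LinearMap.comp_apply, LinearMap.mem_ker.mp hx, map_zero, LinearMap.smul_apply,
      Basis.coord_apply, eq_comm, smul_eq_zero_iff_eq] at hcoeff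
    exact Finsupp.mem_support_iff.mp hs hcoeff
  · rintro _ ⟨s, hs, rfl⟩
    exact ι_mul_basis_of_mem b hs

lemma ker_mulLeft_ι_basis_mul_self (i : I) :
    LinearMap.ker (LinearMap.mulLeft R (ι R (b i))) *
      LinearMap.ker (LinearMap.mulLeft R (ι R (b i))) = ⊥ := by
  rw [ker_mulLeft_ι_basis, span_mul_span, span_eq_bot]
  rintro _ ⟨_, ⟨s, hs, rfl⟩, _, ⟨t, ht, rfl⟩, rfl⟩
  exact basis_mul_of_not_disjoint b (ofCard (s := s) rfl) (ofCard (s := t) rfl)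
    (Finset.not_disjoint_iff.mpr ⟨i, hs, ht⟩)

lemma exteriorPower_inf_ker_mulLeft_ι_basis (n : ℕ) (i : I) :
    ⋀[R]^n M ⊓ LinearMap.ker (LinearMap.mulLeft R (ι R (b i))) =
      span R (b.ExteriorAlgebra '' {s | s.card = n ∧ i ∈ s}) := by
  ext x
  simp only [← span_basis_image_card_eq b n, ker_mulLeft_ι_basis, mem_inf, Basis.mem_span_image]
  exact Set.subset_inter_iff.symm

end ExteriorAlgebra

theorem Fv_lagrangian_general (V : Type*) [AddCommGroup V] [Module ℂ V]
    [FiniteDimensional ℂ V] (hdim : Module.finrank ℂ V = 6)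
    (vol : (extPow V 6) →ₗ[ℂ] ℂ)
    (v : V) (hv : v ≠ 0) :
    (∀ (α β : ExteriorAlgebra ℂ V) (hα : α ∈ Fv V v) (hβ : β ∈ Fv V v),
      wedgeForm V vol α β (Submodule.mem_inf.mp hα).1 (Submodule.mem_inf.mp hβ).1 = 0) ∧
    Module.finrank ℂ (Fv V v) = 10 := by
  obtain ⟨b, i, rfl⟩ := Basis.exists_fin_apply_eq hdim hv
  constructor
  · intro α β hα hβ
    have hαβ : α * β ∈ LinearMap.ker (LinearMap.mulLeft ℂ (ι ℂ (b i))) *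
        LinearMap.ker (LinearMap.mulLeft ℂ (ι ℂ (b i))) :=
      mul_mem_mul (mem_inf.mp hα).2 (mem_inf.mp hβ).2
    rw [ker_mulLeft_ι_basis_mul_self, mem_bot] at hαβ
    simp only [wedgeForm, hαβ]
    exact map_zero vol
  · -- `Fv V v` unfolds to `⋀[ℂ]^3 V ⊓ ker (ι v * ·)`.
    have hFv : Fv V (b i) = span ℂ (b.ExteriorAlgebra '' {s | s.card = 3 ∧ i ∈ s}) :=
      exteriorPower_inf_ker_mulLeft_ι_basis b 3 i
    have hset : {s : Finset (Fin 6) | s.card = 3 ∧ i ∈ s} =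
        ↑({s | s.card = 3 ∧ i ∈ s} : Finset (Finset (Fin 6))) := by
      simp
    have hcard : ∀ j : Fin 6,
        ({s | s.card = 3 ∧ j ∈ s} : Finset (Finset (Fin 6))).card = 10 := by
      decide
    rw [hFv, hset, Basis.finrank_span_image, hcard]

/-- Let `V` be a 6-dimensional complex vector space, `vol : ⋀⁶V ≃ ℂ` a volume
form and `(α,β)_V = vol (α ∧ β)` the induced symplectic form on `⋀³V`. For every
nonzero `v ∈ V`, the subspace `F_v = {α ∈ ⋀³V : v ∧ α = 0}` is isotropic of
dimension 10, i.e. a Lagrangian subspace of the 20-dimensional symplectic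
vector space `⋀³V`. -/
theorem Fv_lagrangian (V : Type*) [AddCommGroup V] [Module ℂ V]
    [FiniteDimensional ℂ V] (hdim : Module.finrank ℂ V = 6)
    (vol : (extPow V 6) →ₗ[ℂ] ℂ) (hvol : Function.Bijective vol)
    (v : V) (hv : v ≠ 0) :
    (∀ (α β : ExteriorAlgebra ℂ V) (hα : α ∈ Fv V v) (hβ : β ∈ Fv V v),
      wedgeForm V vol α β (Submodule.mem_inf.mp hα).1 (Submodule.mem_inf.mp hβ).1 = 0) ∧
    Module.finrank ℂ (Fv V v) = 10 :=
  Fv_lagrangian_general V hdim vol v hv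
end

section
/- Let V be a 6-dimensional complex vector space, vol : ⋀⁶V → ℂ a fixed linear isomorphism, and (α, β)_V := vol(α ∧ β) the induced symplectic form on ⋀³V. For every nonzero v ∈ V there exists a 10-dimensional subspace A ⊂ ⋀³V with (α, β)_V = 0 for all α, β ∈ A (i.e. A is Lagrangian) and A ∩ F_v = {0}. -/
/-!
Pick a functional `d` with `d v ≠ 0` and put `W = ker d`, a hyperplane. Then `A = ⋀³W ⊆ ⋀³V`
works: it has dimension `C(5,3) = 10`; the product of two of its elements lies in `⋀⁶W = 0`; and
contraction with `d`, an antiderivation, kills `⋀W` and sends `v ∧ α` to `d v • α - v ∧ (d⌋α)`,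
so `v ∧ α = 0` forces `α = 0` for `α ∈ ⋀³W`.
-/

open ExteriorAlgebra Module

namespace Submodule

variable {R M : Type*} [CommRing R] [AddCommGroup M] [Module R M]

def exteriorPower (W : Submodule R M) (n : ℕ) : Submodule R (ExteriorAlgebra R M) :=
  W.map (ι R) ^ n

theorem exteriorPower_le (W : Submodule R M) (n : ℕ) : W.exteriorPower n ≤ ⋀[R]^n M :=
  pow_le_pow_left' LinearMap.map_le_range n

theorem exteriorPower_eq_map (W : Submodule R M) (n : ℕ) :
    W.exteriorPower n = (⋀[R]^n W).map (ExteriorAlgebra.map W.subtype).toLinearMap := by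
  rw [exteriorPower, Submodule.map_pow, ι_range_map_map, range_subtype]

theorem mul_mem_exteriorPower_add {W : Submodule R M} {m n : ℕ} {x y : ExteriorAlgebra R M}
    (hx : x ∈ W.exteriorPower m) (hy : y ∈ W.exteriorPower n) :
    x * y ∈ W.exteriorPower (m + n) := by
  rw [exteriorPower, pow_add]
  exact mul_mem_mul hx hy

theorem contractLeft_eq_zero_of_mem_exteriorPower {d : Dual R M} {W : Submodule R M}
    (hW : W ≤ LinearMap.ker d) {n : ℕ} {x : ExteriorAlgebra R M} (hx : x ∈ W.exteriorPower n) :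
    CliffordAlgebra.contractLeft d x = 0 := by
  refine Submodule.pow_induction_on_left _ (CliffordAlgebra.contractLeft_algebraMap _ d)
    (fun x y hx hy => by rw [map_add, hx, hy, add_zero]) (fun m hm x hx => ?_) hx
  obtain ⟨w, hw, rfl⟩ := mem_map.mp hm
  rw [ι, CliffordAlgebra.contractLeft_ι_mul, hx, hW hw, zero_smul, mul_zero, sub_zero]

end Submodule

theorem ExteriorAlgebra.eq_zero_of_ι_mul_eq_zero {R M : Type*} [CommRing R] [AddCommGroup M]
    [Module R M] {d : Dual R M} {v : M} (hv : IsUnit (d v)) {x : ExteriorAlgebra R M}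
    (hx : CliffordAlgebra.contractLeft d x = 0) (h : ι R v * x = 0) : x = 0 := by
  have := congrArg (CliffordAlgebra.contractLeft d) h
  rw [ι, CliffordAlgebra.contractLeft_ι_mul, hx, mul_zero, sub_zero, map_zero] at this
  exact hv.smul_eq_zero.mp this

section Field

variable {K V : Type*} [Field K] [AddCommGroup V] [Module K V]

theorem exteriorPower_eq_bot_of_finrank_lt [FiniteDimensional K V] {n : ℕ}
    (h : finrank K V < n) : ⋀[K]^n V = ⊥ :=
  Submodule.finrank_eq_zero.mp <| by rw [exteriorPower.finrank_eq, Nat.choose_eq_zero_of_lt h]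

namespace Submodule

theorem finrank_exteriorPower (W : Submodule K V) [FiniteDimensional K W] (n : ℕ) :
    finrank K (W.exteriorPower n) = (finrank K W).choose n := by
  rw [W.exteriorPower_eq_map, ← exteriorPower.finrank_eq K n,
    ((⋀[K]^n W).equivMapOfInjective (ExteriorAlgebra.map W.subtype).toLinearMap
      (map_injective_field W.ker_subtype)).finrank_eq]

theorem exteriorPower_eq_bot_of_finrank_lt {W : Submodule K V} [FiniteDimensional K W] {n : ℕ}
    (h : finrank K W < n) : W.exteriorPower n = ⊥ := by
  rw [W.exteriorPower_eq_map, _root_.exteriorPower_eq_bot_of_finrank_lt h, map_bot]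

end Submodule

end Field

theorem wedgeForm_eq_zero_of_mul_eq_zero {V : Type*} [AddCommGroup V] [Module ℂ V]
    (vol : (extPow V 6) →ₗ[ℂ] ℂ) {α β : ExteriorAlgebra ℂ V}
    (hα : α ∈ extPow V 3) (hβ : β ∈ extPow V 3) (h : α * β = 0) :
    wedgeForm V vol α β hα hβ = 0 := by
  rw [wedgeForm, ← map_zero vol]
  exact congrArg vol (Subtype.ext h)

theorem exists_lagrangian_transverse_to_Fv_general (V : Type*) [AddCommGroup V]
    [Module ℂ V] [FiniteDimensional ℂ V] (hdim : Module.finrank ℂ V = 6)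
    (vol : (extPow V 6) →ₗ[ℂ] ℂ)
    (v : V) (hv : v ≠ 0) :
    ∃ A : Submodule ℂ (ExteriorAlgebra ℂ V), A ≤ extPow V 3 ∧
      Module.finrank ℂ A = 10 ∧
      (∀ (α β : ExteriorAlgebra ℂ V) (hα : α ∈ A) (hβ : β ∈ A),
        ∀ (hA : A ≤ extPow V 3), wedgeForm V vol α β (hA hα) (hA hβ) = 0) ∧
      A ⊓ Fv V v = ⊥ := by
  obtain ⟨d, hd⟩ := Projective.exists_dual_ne_zero ℂ hv
  have hW : finrank ℂ (LinearMap.ker d) = 5 := by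
    have := Dual.finrank_ker_add_one_of_ne_zero (f := d) (by rintro rfl; exact hd rfl)
    omega
  set W := LinearMap.ker d
  refine ⟨W.exteriorPower 3, W.exteriorPower_le 3, ?_, ?_, ?_⟩
  · rw [W.finrank_exteriorPower, hW]
    rfl
  · intro α β hα hβ hA
    have hαβ := Submodule.mul_mem_exteriorPower_add hα hβ
    rw [W.exteriorPower_eq_bot_of_finrank_lt (by omega), Submodule.mem_bot] at hαβ
    exact wedgeForm_eq_zero_of_mul_eq_zero vol _ _ hαβ
  · refine eq_bot_iff.mpr fun x ⟨hxA, hxF⟩ => ?_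
    exact eq_zero_of_ι_mul_eq_zero hd.isUnit
      (Submodule.contractLeft_eq_zero_of_mem_exteriorPower le_rfl hxA) hxF.2

/-- Let `V` be a 6-dimensional complex vector space, `vol : ⋀⁶V ≃ ℂ` a volume
form and `(α,β)_V = vol(α ∧ β)` the induced symplectic form on `⋀³V`. For every
nonzero `v ∈ V` there exists a 10-dimensional Lagrangian subspace `A ⊆ ⋀³V`
with `A ∩ F_v = {0}`. -/
theorem exists_lagrangian_transverse_to_Fv (V : Type*) [AddCommGroup V]
    [Module ℂ V] [FiniteDimensional ℂ V] (hdim : Module.finrank ℂ V = 6)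
    (vol : (extPow V 6) →ₗ[ℂ] ℂ) (hvol : Function.Bijective vol)
    (v : V) (hv : v ≠ 0) :
    ∃ A : Submodule ℂ (ExteriorAlgebra ℂ V), A ≤ extPow V 3 ∧
      Module.finrank ℂ A = 10 ∧
      (∀ (α β : ExteriorAlgebra ℂ V) (hα : α ∈ A) (hβ : β ∈ A),
        ∀ (hA : A ≤ extPow V 3), wedgeForm V vol α β (hA hα) (hA hβ) = 0) ∧
      A ⊓ Fv V v = ⊥ :=
  exists_lagrangian_transverse_to_Fv_general V hdim vol v hv
end

section
/- Let Θ be the rank-23 lattice U^{⊕3} ⊕ E8(−1)^{⊕2} ⊕ ⟨−2⟩. If v ∈ Θ is primitive with divisibility div(v) = 2, then q(v) ≡ 6 (mod 8). -/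
/-- The underlying `ℤ`-module of the rank-23 lattice
`Θ = U³ ⊕ E₈(−1)² ⊕ ⟨−2⟩`: three hyperbolic-plane coordinates, two
`E₈`-coordinates, and one `⟨−2⟩`-coordinate. -/
abbrev Theta : Type := (Fin 3 → Fin 2 → ℤ) × (Fin 2 → Fin 8 → ℤ) × ℤ

/-- The bilinear form of `Θ = U³ ⊕ E₈(−1)² ⊕ ⟨−2⟩`: block-diagonal with three
hyperbolic planes `U`, two copies of the negative of the `E₈` Cartan matrix,
and one `1×1` block `(−2)`. -/
def bform (x y : Theta) : ℤ :=
  (∑ i : Fin 3, (x.1 i 0 * y.1 i 1 + x.1 i 1 * y.1 i 0)) +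
  (∑ j : Fin 2, ∑ a : Fin 8, ∑ b : Fin 8,
    x.2.1 j a * (-(CartanMatrix.E₈ a b)) * y.2.1 j b) +
  (-2) * x.2.2 * y.2.2

/-- A vector of `Θ` is primitive if it is not of the form `k • w` with `w ∈ Θ`
and `|k| ≥ 2`. -/
def ThetaPrimitive (v : Theta) : Prop :=
  ¬ ∃ (n : ℤ) (w : Theta), 2 ≤ |n| ∧ v = n • w

/-- `IsDiv v d` says that the nonnegative integer `d` generates the ideal
`{(v,w) : w ∈ Θ} ⊆ ℤ`, i.e. `d` is the divisibility `div(v)`. -/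
def IsDiv (v : Theta) (d : ℕ) : Prop :=
  (∀ w : Theta, (d : ℤ) ∣ bform v w) ∧
  ∀ e : ℤ, (∀ w : Theta, e ∣ bform v w) → e ∣ (d : ℤ)

set_option maxRecDepth 10000 in
lemma e8_mod2 : ∀ x : Fin 8 → ZMod 2,
    (∀ b : Fin 8, (∑ a : Fin 8, x a * (-(((CartanMatrix.E₈ a b : ℤ)) : ZMod 2))) = 0) →
    ∀ a, x a = 0 := by decide

set_option maxRecDepth 10000 in
lemma e8_even : ∀ x : Fin 8 → ZMod 2,
    (∑ a : Fin 8, ∑ b : Fin 8, x a * (-(((CartanMatrix.E₈ a b : ℤ)) : ZMod 2)) * x b) = 0 := by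
  decide

/-- If `v` is a primitive vector of the lattice `Θ = U³ ⊕ E₈(−1)² ⊕ ⟨−2⟩` with
divisibility `div(v) = 2`, then `q(v) ≡ 6 (mod 8)`. -/
theorem theta_div_two_square_mod_eight (v : Theta) (hv : ThetaPrimitive v)
    (hd : IsDiv v 2) : bform v v % 8 = 6 := by
  obtain ⟨h2, -⟩ := hd
  -- U coordinates are even
  have hU : ∀ i : Fin 3, ∀ j : Fin 2, 2 ∣ v.1 i j := by
    intro i j
    fin_cases i <;> fin_cases j <;>
      [ (have := h2 (![![0,1],![0,0],![0,0]], 0, 0));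
        (have := h2 (![![1,0],![0,0],![0,0]], 0, 0));
        (have := h2 (![![0,0],![0,1],![0,0]], 0, 0));
        (have := h2 (![![0,0],![1,0],![0,0]], 0, 0));
        (have := h2 (![![0,0],![0,0],![0,1]], 0, 0));
        (have := h2 (![![0,0],![0,0],![1,0]], 0, 0)) ] <;>
      simpa [bform, Fin.sum_univ_three, Matrix.vecHead, Matrix.vecTail, Function.comp] using this
  -- E8 coordinates are even
  have hEc : ∀ j : Fin 2, ∀ b : Fin 8,
      2 ∣ ∑ a : Fin 8, v.2.1 j a * (-(CartanMatrix.E₈ a b)) := by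
    intro j b
    have := h2 (0, fun j' a' => if j' = j ∧ a' = b then 1 else 0, 0)
    simp only [bform] at this
    fin_cases j <;>
      simpa [Fin.sum_univ_two, Finset.mul_sum, mul_ite, mul_one, mul_zero,
        Finset.sum_ite_eq', and_comm] using this
  have hE : ∀ j : Fin 2, ∀ a : Fin 8, 2 ∣ v.2.1 j a := by
    intro j a
    have key : ∀ a, ((v.2.1 j a : ℤ) : ZMod 2) = 0 := by
      apply e8_mod2
      intro b
      have h0 : ((∑ a : Fin 8, v.2.1 j a * (-(CartanMatrix.E₈ a b)) : ℤ) : ZMod 2) = 0 :=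
        (ZMod.intCast_zmod_eq_zero_iff_dvd _ 2).2 (hEc j b)
      push_cast at h0
      exact h0
    exact (ZMod.intCast_zmod_eq_zero_iff_dvd _ 2).1 (key a)
  -- last coordinate is odd
  have hm : ¬ (2 ∣ v.2.2) := by
    intro hdvd
    apply hv
    refine ⟨2, (fun i j => v.1 i j / 2, fun j a => v.2.1 j a / 2, v.2.2 / 2), by norm_num, ?_⟩
    refine Prod.ext ?_ (Prod.ext ?_ ?_)
    · funext i j
      simpa using (Int.mul_ediv_cancel' (hU i j)).symm
    · funext j a
      simpa using (Int.mul_ediv_cancel' (hE j a)).symm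
    · simpa using (Int.mul_ediv_cancel' hdvd).symm
  -- now compute
  have hA : (8:ℤ) ∣ ∑ i : Fin 3, (v.1 i 0 * v.1 i 1 + v.1 i 1 * v.1 i 0) := by
    refine Finset.dvd_sum fun i _ => ?_
    obtain ⟨a, ha⟩ := hU i 0
    obtain ⟨b, hb⟩ := hU i 1
    exact ⟨a * b, by rw [ha, hb]; ring⟩
  have hB : (8:ℤ) ∣ ∑ j : Fin 2, ∑ a : Fin 8, ∑ b : Fin 8,
      v.2.1 j a * (-(CartanMatrix.E₈ a b)) * v.2.1 j b := by
    refine Finset.dvd_sum fun j _ => ?_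
    set w : Fin 8 → ℤ := fun a => v.2.1 j a / 2 with hw
    have hwv : ∀ a, v.2.1 j a = 2 * w a := fun a => (Int.mul_ediv_cancel' (hE j a)).symm
    have hc : (((∑ a : Fin 8, ∑ b : Fin 8, w a * (-(CartanMatrix.E₈ a b)) * w b : ℤ)) : ZMod 2) = 0 := by
      push_cast
      exact e8_even (fun a => ((w a : ℤ) : ZMod 2))
    have hT := (ZMod.intCast_zmod_eq_zero_iff_dvd _ 2).1 hc
    push_cast at hT
    obtain ⟨t, ht⟩ := hT
    refine ⟨t, ?_⟩
    calc ∑ a : Fin 8, ∑ b : Fin 8, v.2.1 j a * (-(CartanMatrix.E₈ a b)) * v.2.1 j b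
        = 4 * ∑ a : Fin 8, ∑ b : Fin 8, w a * (-(CartanMatrix.E₈ a b)) * w b := by
          rw [Finset.mul_sum]
          refine Finset.sum_congr rfl fun a _ => ?_
          rw [Finset.mul_sum]
          refine Finset.sum_congr rfl fun b _ => ?_
          rw [hwv a, hwv b]; ring
      _ = 8 * t := by rw [ht]; ring
  obtain ⟨ka, hka⟩ := hA
  obtain ⟨kb, hkb⟩ := hB
  have hmsq : ∃ t : ℤ, v.2.2 * v.2.2 = 8 * t + 1 := by
    rw [Int.two_dvd_ne_zero] at hm
    obtain ⟨k, hk⟩ : ∃ k, v.2.2 = 2 * k + 1 := ⟨v.2.2 / 2, by omega⟩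
    obtain ⟨s, hs⟩ : (2:ℤ) ∣ k * (k + 1) := (Int.even_mul_succ_self k).two_dvd
    exact ⟨s, by rw [hk]; nlinarith [hs]⟩
  obtain ⟨t, ht⟩ := hmsq
  have key : bform v v = 8 * ka + 8 * kb + (-2) * (8 * t + 1) := by
    rw [bform, hka, hkb, mul_assoc, ht]
  rw [key]
  omega
end

section
/- Let Θ be the rank-23 lattice U^{⊕3} ⊕ E8(−1)^{⊕2} ⊕ ⟨−2⟩, and let v, w ∈ Θ be primitive nonzero vectors. There exists an isometry φ of Θ (a ℤ-linear automorphism preserving the bilinear form) with φ(v) = w if and only if q(v) = q(w) and div(v) = div(w). -/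
namespace Matrix

theorem even_dotProduct_mulVec_self {n : Type*} [Fintype n] [LinearOrder n]
    (A : Matrix n n ℤ) (hA : A.IsSymm) (hdiag : ∀ i, Even (A i i)) (x : n → ℤ) :
    Even (x ⬝ᵥ A *ᵥ x) := by
  let L : Matrix n n ℤ := of fun i j => if i < j then A i j else if i = j then A i i / 2 else 0
  have hL : A = L + Lᵀ := by
    ext i j
    rcases lt_trichotomy i j with h | rfl | h
    · simp [L, h, h.not_gt, h.ne']
    · obtain ⟨r, hr⟩ := hdiag i
      simp [L, hr]
      omega
    · simp [L, h, h.not_gt, h.ne', hA.apply i j]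
  refine ⟨x ⬝ᵥ L *ᵥ x, ?_⟩
  rw [hL, add_mulVec, dotProduct_add, dotProduct_mulVec x Lᵀ, vecMul_transpose, dotProduct_comm]

end Matrix

namespace LinearMap.BilinForm

variable {R M : Type*} [CommRing R] [AddCommGroup M] [Module R M] (B : LinearMap.BilinForm R M)

def SameOrbit (v w : M) : Prop :=
  ∃ φ : M ≃ₗ[R] M, (∀ x y, B (φ x) (φ y) = B x y) ∧ φ v = w

namespace SameOrbit

variable {B}

theorem of_isometry (φ : M ≃ₗ[R] M) (hφ : ∀ x y, B (φ x) (φ y) = B x y) (v : M) :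
    SameOrbit B v (φ v) :=
  ⟨φ, hφ, rfl⟩

theorem refl (v : M) : SameOrbit B v v :=
  of_isometry (LinearEquiv.refl R M) (fun _ _ => rfl) v

theorem symm {v w : M} (h : SameOrbit B v w) : SameOrbit B w v := by
  obtain ⟨φ, hφ, rfl⟩ := h
  refine ⟨φ.symm, fun x y => ?_, φ.symm_apply_apply v⟩
  simpa using (hφ (φ.symm x) (φ.symm y)).symm

theorem trans {u v w : M} (h₁ : SameOrbit B u v) (h₂ : SameOrbit B v w) :
    SameOrbit B u w := by
  obtain ⟨φ, hφ, rfl⟩ := h₁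
  obtain ⟨ψ, hψ, rfl⟩ := h₂
  exact ⟨φ.trans ψ, fun x y => (hψ _ _).trans (hφ x y), rfl⟩

theorem apply_self_eq {v w : M} (h : SameOrbit B v w) : B w w = B v v := by
  obtain ⟨φ, hφ, rfl⟩ := h
  exact hφ v v

theorem forall_dvd_iff {v w : M} (h : SameOrbit B v w) (r : R) :
    (∀ z, r ∣ B v z) ↔ (∀ z, r ∣ B w z) := by
  obtain ⟨φ, hφ, rfl⟩ := h
  refine ⟨fun hv z => ?_, fun hw z => ?_⟩
  · rw [← φ.apply_symm_apply z, hφ]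
    exact hv _
  · simpa [hφ] using hw (φ z)

end SameOrbit

def eichlerTransvection (e x : M) (c : R) : M →ₗ[R] M :=
  LinearMap.id + (B.flip x).smulRight e - (B.flip e).smulRight x - c • (B.flip e).smulRight e

variable {B}

theorem eichlerTransvection_apply (e x : M) (c : R) (v : M) :
    B.eichlerTransvection e x c v = v + B v x • e - B v e • x - (c * B v e) • e := by
  simp [eichlerTransvection, smul_smul]

theorem apply_eichlerTransvection (e x : M) (c : R) (v z : M) :
    B (B.eichlerTransvection e x c v) z
      = B v z + B v x * B e z - B v e * B x z - c * B v e * B e z := by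
  simp [eichlerTransvection_apply]

variable {e x : M} {c : R}

theorem eichlerTransvection_isometry (hB : B.IsSymm) (he : B e e = 0) (hex : B e x = 0)
    (hx : B x x = 2 * c) (v w : M) :
    B (B.eichlerTransvection e x c v) (B.eichlerTransvection e x c w) = B v w := by
  have hxe : B x e = 0 := by rw [hB.eq, hex]
  simp only [eichlerTransvection_apply, map_add, map_sub, map_smul, LinearMap.add_apply,
    LinearMap.sub_apply, LinearMap.smul_apply, smul_eq_mul, he, hex, hxe, hx, hB.eq e w,
    hB.eq x w]
  ring

theorem eichlerTransvection_neg_apply (hB : B.IsSymm) (he : B e e = 0) (hex : B e x = 0)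
    (hx : B x x = 2 * c) (v : M) :
    B.eichlerTransvection e (-x) c (B.eichlerTransvection e x c v) = v := by
  have hxe : B x e = 0 := by rw [hB.eq, hex]
  simp only [eichlerTransvection_apply, map_add, map_sub, map_smul, map_neg,
    he, hex, hxe, hx]
  module

theorem sameOrbit_eichlerTransvection (hB : B.IsSymm) (he : B e e = 0) (hex : B e x = 0)
    (hx : B x x = 2 * c) (v : M) :
    SameOrbit B v (B.eichlerTransvection e x c v) := by
  have hex' : B e (-x) = 0 := by rw [map_neg, hex, neg_zero]
  have hx' : B (-x) (-x) = 2 * c := by simpa using hx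
  refine SameOrbit.of_isometry (LinearEquiv.ofLinearMap (B.eichlerTransvection e x c)
    (B.eichlerTransvection e (-x) c) ?_ ?_) (eichlerTransvection_isometry hB he hex hx) v
  · ext w
    simpa using eichlerTransvection_neg_apply hB he hex' hx' w
  · ext w
    exact eichlerTransvection_neg_apply hB he hex hx w

end LinearMap.BilinForm

open Matrix CartanMatrix LinearMap.BilinForm

namespace Theta

-- `Theta` is a product of rings, and `simp` would otherwise turn `k • x` into `↑k * x`.
attribute [-simp] zsmul_eq_mul natCast_zsmul

theorem bform_eq (x y : Theta) :
    bform x y = ∑ i, (x.1 i 0 * y.1 i 1 + x.1 i 1 * y.1 i 0)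
      - ∑ j, x.2.1 j ⬝ᵥ E₈ *ᵥ y.2.1 j - 2 * x.2.2 * y.2.2 := by
  simp only [bform, dotProduct, mulVec, Finset.mul_sum, neg_mul, mul_neg, Finset.sum_neg_distrib,
    mul_assoc]
  ring

def form : LinearMap.BilinForm ℤ Theta :=
  LinearMap.mk₂ ℤ bform
    (fun x x' y => by
      simp only [bform_eq, Prod.fst_add, Prod.snd_add, Pi.add_apply, add_dotProduct,
        Fin.sum_univ_three, Fin.sum_univ_two]
      ring)
    (fun k x y => by
      simp only [bform_eq, Prod.smul_fst, Prod.smul_snd, Pi.smul_apply, smul_dotProduct,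
        smul_eq_mul, Fin.sum_univ_three, Fin.sum_univ_two]
      ring)
    (fun x y y' => by
      simp only [bform_eq, Prod.fst_add, Prod.snd_add, Pi.add_apply, mulVec_add, dotProduct_add,
        Fin.sum_univ_three, Fin.sum_univ_two]
      ring)
    (fun k x y => by
      simp only [bform_eq, Prod.smul_fst, Prod.smul_snd, Pi.smul_apply, mulVec_smul,
        dotProduct_smul, smul_eq_mul, Fin.sum_univ_three, Fin.sum_univ_two]
      ring)

local notation "⟪" x ", " y "⟫" => form x y

theorem form_apply (x y : Theta) : ⟪x, y⟫ = bform x y := rfl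

theorem form_isSymm : form.IsSymm := by
  refine ⟨fun x y => ?_⟩
  have hE₈ (a b : Fin 8 → ℤ) : a ⬝ᵥ E₈ *ᵥ b = b ⬝ᵥ E₈ *ᵥ a := by
    rw [dotProduct_mulVec, ← mulVec_transpose, E₈_transpose, dotProduct_comm]
  simp only [form_apply, bform_eq, hE₈ (x.2.1 _), Fin.sum_univ_three]
  ring

theorem even_form_self (x : Theta) : Even ⟪x, x⟫ := by
  have hE₈ (y : Fin 8 → ℤ) := even_dotProduct_mulVec_self E₈ E₈_isSymm (fun _ => ⟨1, by simp⟩) y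
  obtain ⟨r₀, h₀⟩ := hE₈ (x.2.1 0)
  obtain ⟨r₁, h₁⟩ := hE₈ (x.2.1 1)
  refine ⟨∑ i, x.1 i 0 * x.1 i 1 - r₀ - r₁ - x.2.2 * x.2.2, ?_⟩
  simp only [form_apply, bform_eq, Fin.sum_univ_two, Fin.sum_univ_three, h₀, h₁]
  ring

def e (i : Fin 3) : Theta := (Pi.single i (Pi.single 0 1), 0, 0)

def f (i : Fin 3) : Theta := (Pi.single i (Pi.single 1 1), 0, 0)

def δ : Theta := (0, 0, 1)

@[simp] theorem e_fst (i : Fin 3) : (e i).1 = Pi.single i (Pi.single 0 1) := rfl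
@[simp] theorem e_snd (i : Fin 3) : (e i).2 = 0 := rfl
@[simp] theorem f_fst (i : Fin 3) : (f i).1 = Pi.single i (Pi.single 1 1) := rfl
@[simp] theorem f_snd (i : Fin 3) : (f i).2 = 0 := rfl
@[simp] theorem δ_fst : δ.1 = 0 := rfl
@[simp] theorem δ_snd : δ.2 = (0, 1) := rfl

def e₈Dual (j : Fin 2) (a : Fin 8) : Theta := (0, Pi.single j (adjugate E₈ *ᵥ Pi.single a 1), 0)

@[simp] theorem form_e (x : Theta) (i : Fin 3) : ⟪x, e i⟫ = x.1 i 1 := by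
  fin_cases i <;> simp [form_apply, bform_eq, e, Fin.sum_univ_three]

@[simp] theorem form_f (x : Theta) (i : Fin 3) : ⟪x, f i⟫ = x.1 i 0 := by
  fin_cases i <;> simp [form_apply, bform_eq, f, Fin.sum_univ_three]

@[simp] theorem form_δ (x : Theta) : ⟪x, δ⟫ = -2 * x.2.2 := by
  simp [form_apply, bform_eq, δ]

theorem form_e₈Dual (x : Theta) (j : Fin 2) (a : Fin 8) : ⟪x, e₈Dual j a⟫ = -x.2.1 j a := by
  have h : E₈ *ᵥ (adjugate E₈).col a = Pi.single a 1 := by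
    rw [← mulVec_single_one, mulVec_mulVec, mul_adjugate, E₈_det, one_smul, one_mulVec]
  fin_cases j <;> simp [form_apply, bform_eq, e₈Dual, Fin.sum_univ_two, h]

@[simp] theorem e_form (x : Theta) (i : Fin 3) : ⟪e i, x⟫ = x.1 i 1 := by
  rw [form_isSymm.eq, form_e]

@[simp] theorem f_form (x : Theta) (i : Fin 3) : ⟪f i, x⟫ = x.1 i 0 := by
  rw [form_isSymm.eq, form_f]

theorem dvd_coords_of_forall_dvd {r : ℤ} {x : Theta} (h : ∀ z, r ∣ ⟪x, z⟫) :
    (∀ i j, r ∣ x.1 i j) ∧ (∀ j a, r ∣ x.2.1 j a) ∧ r ∣ 2 * x.2.2 := by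
  refine ⟨fun i j => ?_, fun j a => ?_, ?_⟩
  · fin_cases j
    · simpa using h (f i)
    · simpa using h (e i)
  · simpa [form_e₈Dual] using h (e₈Dual j a)
  · simpa using h δ

theorem eq_zero_of_isDiv_zero {x : Theta} (hx : IsDiv x 0) : x = 0 := by
  obtain ⟨hU, hE, hδ⟩ := dvd_coords_of_forall_dvd (r := 0) (x := x)
    (fun z => by exact_mod_cast hx.1 z)
  simp only [zero_dvd_iff, mul_eq_zero, two_ne_zero, false_or] at hU hE hδ
  ext <;> simp [hU, hE, hδ]

def permU (π : Equiv.Perm (Fin 3)) : Theta ≃ₗ[ℤ] Theta :=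
  (LinearEquiv.funCongrLeft ℤ (Fin 2 → ℤ) π).prodCongr (LinearEquiv.refl ℤ _)

def flipU : Theta ≃ₗ[ℤ] Theta :=
  (LinearEquiv.piCongrRight fun _ => LinearEquiv.funCongrLeft ℤ ℤ (Equiv.swap 0 1)).prodCongr
    (LinearEquiv.refl ℤ _)

theorem form_permU (π : Equiv.Perm (Fin 3)) (x y : Theta) : ⟪permU π x, permU π y⟫ = ⟪x, y⟫ := by
  simp only [form_apply, bform_eq]
  congr 2
  exact Equiv.sum_comp π (fun i => x.1 i 0 * y.1 i 1 + x.1 i 1 * y.1 i 0)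

theorem form_flipU (x y : Theta) : ⟪flipU x, flipU y⟫ = ⟪x, y⟫ := by
  simp [form_apply, bform_eq, flipU, add_comm]

theorem _root_.IsDiv.of_sameOrbit {v w : Theta} {d : ℕ} (hd : IsDiv v d)
    (h : SameOrbit form v w) : IsDiv w d :=
  ⟨(h.forall_dvd_iff _).1 hd.1, fun r hr => hd.2 r ((h.forall_dvd_iff r).2 hr)⟩

theorem _root_.IsDiv.unique {v : Theta} {d d' : ℕ} (hd : IsDiv v d) (hd' : IsDiv v d') : d = d' :=
  Nat.dvd_antisymm (Int.natCast_dvd_natCast.mp (hd'.2 _ hd.1))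
    (Int.natCast_dvd_natCast.mp (hd.2 _ hd'.1))

theorem _root_.ThetaPrimitive.ne_zero {v : Theta} (hv : ThetaPrimitive v) : v ≠ 0 := by
  rintro rfl
  exact hv ⟨2, 0, by norm_num, by simp⟩

theorem _root_.ThetaPrimitive.of_sameOrbit {v w : Theta} (hv : ThetaPrimitive v)
    (h : SameOrbit form v w) : ThetaPrimitive w := by
  obtain ⟨φ, -, rfl⟩ := h
  rintro ⟨n, u, hn, hu⟩
  exact hv ⟨n, φ.symm u, hn, by rw [← map_smul, ← hu, LinearEquiv.symm_apply_apply]⟩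

def IsMinimal (u : Theta) : Prop :=
  ∀ u', SameOrbit form u u' → ⟪u', f 0⟫ ≠ 0 → ⟪u, f 0⟫ ≠ 0 ∧ |⟪u, f 0⟫| ≤ |⟪u', f 0⟫|

theorem exists_sameOrbit_isMinimal (v : Theta) : ∃ u, SameOrbit form v u ∧ IsMinimal u := by
  classical
  by_cases h : ∃ u, SameOrbit form v u ∧ ⟪u, f 0⟫ ≠ 0
  · have hn : ∃ n, ∃ u, SameOrbit form v u ∧ ⟪u, f 0⟫ ≠ 0 ∧ ⟪u, f 0⟫.natAbs = n :=
      let ⟨u, hvu, hu⟩ := h; ⟨_, u, hvu, hu, rfl⟩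
    obtain ⟨u, hvu, hu, hun⟩ := Nat.find_spec hn
    refine ⟨u, hvu, fun u' huu' hu' => ⟨hu, ?_⟩⟩
    have := Nat.find_min' hn ⟨u', hvu.trans huu', hu', rfl⟩
    rw [Int.abs_eq_natAbs, Int.abs_eq_natAbs, hun]
    exact_mod_cast this
  · exact ⟨v, .refl v, fun u' hvu' hu' => (h ⟨u', hvu', hu'⟩).elim⟩

namespace IsMinimal

variable {u : Theta}

theorem of_sameOrbit (hu : IsMinimal u) {u' : Theta} (h : SameOrbit form u u')
    (h' : ⟪u', f 0⟫ = ⟪u, f 0⟫) : IsMinimal u' := fun u'' h'' => h' ▸ hu u'' (h.trans h'')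

theorem dvd (hu : IsMinimal u) {g : ℤ}
    (hg : ∀ k : ℤ, ∃ u', SameOrbit form u u' ∧ ⟪u', f 0⟫ = g + k * ⟪u, f 0⟫) : ⟪u, f 0⟫ ∣ g := by
  obtain ⟨u', huu', hu'⟩ := hg (-(g / ⟪u, f 0⟫))
  have hmod : ⟪u', f 0⟫ = g % ⟪u, f 0⟫ := by rw [hu', Int.emod_def]; ring
  by_contra hndvd
  have hne : g % ⟪u, f 0⟫ ≠ 0 := fun h => hndvd (Int.dvd_of_emod_eq_zero h)
  obtain ⟨ha, hle⟩ := hu u' huu' (hmod ▸ hne)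
  rw [hmod, abs_of_nonneg (Int.emod_nonneg g ha)] at hle
  exact (Int.emod_lt_abs g ha).not_ge hle

theorem dvd_form_f_one (hu : IsMinimal u) : ⟪u, f 0⟫ ∣ ⟪u, f 1⟫ := by
  refine hu.dvd fun k => ?_
  have hT := sameOrbit_eichlerTransvection form_isSymm (e := e 1) (x := k • f 0) (c := 0)
    (by simp) (by simp) (by simp) u
  refine ⟨_, hT.trans (.of_isometry _ (form_permU (.swap 0 1)) _), ?_⟩
  simp [permU, eichlerTransvection_apply]

theorem dvd_form_e_one (hu : IsMinimal u) : ⟪u, f 0⟫ ∣ ⟪u, e 1⟫ := by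
  refine hu.dvd fun k => ?_
  have hT := sameOrbit_eichlerTransvection form_isSymm (e := f 1) (x := k • f 0) (c := 0)
    (by simp) (by simp) (by simp) u
  refine ⟨_, (hT.trans (.of_isometry _ (form_permU (.swap 0 1)) _)).trans
    (.of_isometry _ form_flipU _), ?_⟩
  simp [permU, flipU, eichlerTransvection_apply]

theorem exists_form_e_one_eq_zero (hu : IsMinimal u) :
    ∃ u', SameOrbit form u u' ∧ IsMinimal u' ∧ ⟪u', f 0⟫ = ⟪u, f 0⟫ ∧ ⟪u', e 1⟫ = 0 := by
  have h := sameOrbit_eichlerTransvection form_isSymm (e := f 1)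
    (x := (-(⟪u, e 1⟫ / ⟪u, f 0⟫)) • f 0) (c := 0) (by simp) (by simp) (by simp) u
  have hf : ⟪form.eichlerTransvection (f 1) ((-(⟪u, e 1⟫ / ⟪u, f 0⟫)) • f 0) 0 u, f 0⟫
      = ⟪u, f 0⟫ := by
    simp [eichlerTransvection_apply]
  have hdvd := hu.dvd_form_e_one
  simp only [form_e, form_f] at hdvd
  refine ⟨_, h, hu.of_sameOrbit h hf, hf, ?_⟩
  simp [eichlerTransvection_apply, Int.ediv_mul_cancel hdvd]

theorem dvd_form_of_form_e_one_eq_zero (hu : IsMinimal u) (hu₀ : ⟪u, e 1⟫ = 0) {y : Theta}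
    (hy : ⟪y, e 1⟫ = 0) : ⟪u, f 0⟫ ∣ ⟪u, y⟫ := by
  obtain ⟨c, hc⟩ := even_form_self y
  have h := sameOrbit_eichlerTransvection form_isSymm (e := e 1) (x := y) (c := c) (by simp)
    (by simpa using hy) (by rw [hc, two_mul]) u
  have h₀ : ⟪form.eichlerTransvection (e 1) y c u, f 0⟫ = ⟪u, f 0⟫ := by
    rw [apply_eichlerTransvection, hu₀]
    simp
  have h₁ : ⟪form.eichlerTransvection (e 1) y c u, f 1⟫ = ⟪u, f 1⟫ + ⟪u, y⟫ := by
    rw [apply_eichlerTransvection, hu₀]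
    simp
  have h := (hu.of_sameOrbit h h₀).dvd_form_f_one
  rw [h₀, h₁] at h
  exact (dvd_add_right hu.dvd_form_f_one).mp h

theorem dvd_form (hu : IsMinimal u) (hu₀ : ⟪u, e 1⟫ = 0) (w : Theta) : ⟪u, f 0⟫ ∣ ⟪u, w⟫ := by
  have hy : ⟪w - ⟪w, e 1⟫ • f 1, e 1⟫ = 0 := by simp
  have hw : ⟪u, w⟫ = ⟪u, w - ⟪w, e 1⟫ • f 1⟫ + ⟪w, e 1⟫ * ⟪u, f 1⟫ := by
    rw [map_sub, map_smul, smul_eq_mul]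
    ring
  rw [hw]
  exact dvd_add (hu.dvd_form_of_form_e_one_eq_zero hu₀ hy)
    (dvd_mul_of_dvd_right hu.dvd_form_f_one _)

end IsMinimal

theorem exists_sameOrbit_forall_dvd (v : Theta) :
    ∃ u, SameOrbit form v u ∧ ∀ w, ⟪u, f 0⟫ ∣ ⟪u, w⟫ := by
  obtain ⟨u, hvu, hu⟩ := exists_sameOrbit_isMinimal v
  obtain ⟨u', huu', hu', -, hu'₀⟩ := hu.exists_form_e_one_eq_zero
  exact ⟨u', hvu.trans huu', hu'.dvd_form hu'₀⟩

theorem exists_sameOrbit_form_f_eq {v : Theta} {d : ℕ} (hd : IsDiv v d) :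
    ∃ u, SameOrbit form v u ∧ ⟪u, f 0⟫ = d ∧ ∀ w, (d : ℤ) ∣ ⟪u, w⟫ := by
  obtain ⟨u, hvu, hu⟩ := exists_sameOrbit_forall_dvd v
  have hdu := hd.of_sameOrbit hvu
  have hd_dvd : (d : ℤ) ∣ ⟪u, f 0⟫ := hdu.1 (f 0)
  have hdvd_d : ⟪u, f 0⟫ ∣ d := hdu.2 _ hu
  have hneg : SameOrbit form u (-u) := .of_isometry (LinearEquiv.neg ℤ) (fun x y => by simp) u
  rcases Int.natAbs_eq ⟪u, f 0⟫ with h | h <;>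
    rw [Nat.dvd_antisymm (Int.natAbs_dvd_natAbs.mpr hdvd_d) (Int.natAbs_dvd_natAbs.mpr hd_dvd)] at h
  · exact ⟨u, hvu, h, hdu.1⟩
  · refine ⟨-u, hvu.trans hneg, by simp [h], fun w => ?_⟩
    rw [map_neg, LinearMap.neg_apply, dvd_neg]
    exact hdu.1 w

theorem exists_sameOrbit_reduced {u : Theta} {d : ℕ} (hd : 0 < d) (hu : ⟪u, f 0⟫ = d)
    (hdvd : ∀ w, (d : ℤ) ∣ ⟪u, w⟫) :
    ∃ B r : ℤ, 0 ≤ r ∧ r < d ∧ SameOrbit form u ((d : ℤ) • e 0 + B • f 0 + r • δ) := by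
  obtain ⟨hU, hE, -⟩ := dvd_coords_of_forall_dvd hdvd
  have hU' (i j) : (d : ℤ) * (u.1 i j / d) = u.1 i j := Int.mul_ediv_cancel' (hU i j)
  have hE' (j a) : (d : ℤ) * (u.2.1 j a / d) = u.2.1 j a := Int.mul_ediv_cancel' (hE j a)
  rw [form_f] at hu
  let x : Theta :=
    (fun i j => if i = 0 then 0 else u.1 i j / d, fun j a => u.2.1 j a / d, u.2.2 / d)
  have hux : u - (d : ℤ) • x = (d : ℤ) • e 0 + u.1 0 1 • f 0 + (u.2.2 % d) • δ := by
    refine Prod.ext (funext fun i => funext fun j => ?_)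
      (Prod.ext (funext fun j => funext fun a => ?_) ?_)
    · fin_cases i <;> fin_cases j <;> simp [x, hu, hU']
    · simp [x, hE']
    · simp [x, Int.emod_def]
  obtain ⟨c, hc⟩ := even_form_self x
  have hT := sameOrbit_eichlerTransvection form_isSymm (e := f 0) (x := x) (c := c) (by simp)
    (by simp [x]) (by rw [hc, two_mul]) u
  refine ⟨u.1 0 1 + ⟪u, x⟫ - c * d, u.2.2 % d, Int.emod_nonneg _ (by omega),
    Int.emod_lt_of_pos _ (by omega), ?_⟩
  convert hT using 1
  rw [eichlerTransvection_apply, form_f, hu]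
  calc _ = (u - (d : ℤ) • x) + (⟪u, x⟫ - c * d) • f 0 := by rw [hux]; module
    _ = _ := by module

theorem eq_sub_one_of_primitive {d : ℕ} {B r : ℤ} (hr : 0 ≤ r) (hrd : r < d) (hB : (d : ℤ) ∣ B)
    (h2r : (d : ℤ) ∣ 2 * r) (hprim : ThetaPrimitive ((d : ℤ) • e 0 + B • f 0 + r • δ)) :
    (d = 1 ∨ d = 2) ∧ r = d - 1 := by
  obtain ⟨B, rfl⟩ := hB
  obtain ⟨m, hm⟩ := h2r
  have hm0 : 0 ≤ m := by nlinarith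
  have hm2 : m < 2 := by nlinarith
  interval_cases m
  · have hr0 : r = 0 := by omega
    subst hr0
    have hd : ¬ 2 ≤ |(d : ℤ)| := fun hd => hprim ⟨d, e 0 + B • f 0, hd, by module⟩
    rw [abs_of_nonneg (by omega)] at hd
    omega
  · have hr1 : ¬ 2 ≤ |r| := fun h => hprim ⟨r, (2 : ℤ) • e 0 + (2 * B) • f 0 + δ, h, by
      rw [show (d : ℤ) = 2 * r by omega]
      module⟩
    rw [abs_of_nonneg hr] at hr1
    omega

def canonical (d : ℕ) (B : ℤ) : Theta := (d : ℤ) • e 0 + B • f 0 + ((d : ℤ) - 1) • δ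

theorem form_canonical_self (d : ℕ) (B : ℤ) :
    ⟪canonical d B, canonical d B⟫ = 2 * d * B - 2 * (d - 1) ^ 2 := by
  simp [canonical]
  ring

theorem exists_sameOrbit_canonical {v : Theta} {d : ℕ} (hv : ThetaPrimitive v) (hd : IsDiv v d) :
    (d = 1 ∨ d = 2) ∧ ∃ B, SameOrbit form v (canonical d B) := by
  have hd₀ : 0 < d := Nat.pos_of_ne_zero fun h => hv.ne_zero (eq_zero_of_isDiv_zero (h ▸ hd))
  obtain ⟨u, hvu, hu, hdvd⟩ := exists_sameOrbit_form_f_eq hd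
  obtain ⟨B, r, hr, hrd, huw⟩ := exists_sameOrbit_reduced hd₀ hu hdvd
  have hdw : ∀ z, (d : ℤ) ∣ ⟪(d : ℤ) • e 0 + B • f 0 + r • δ, z⟫ :=
    (hd.of_sameOrbit (hvu.trans huw)).1
  have hB : (d : ℤ) ∣ B := by simpa using hdw (e 0)
  have h2r : (d : ℤ) ∣ 2 * r := by simpa [mul_comm] using hdw δ
  obtain ⟨hd, rfl⟩ := eq_sub_one_of_primitive hr hrd hB h2r (hv.of_sameOrbit (hvu.trans huw))
  exact ⟨hd, B, hvu.trans huw⟩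

end Theta

theorem theta_orbit_iff_square_and_div_general (v w : Theta)
    (hv : ThetaPrimitive v) (hw : ThetaPrimitive w)
    (dv dw : ℕ) (hdv : IsDiv v dv) (hdw : IsDiv w dw) :
    (∃ φ : Theta ≃ₗ[ℤ] Theta,
        (∀ x y : Theta, bform (φ x) (φ y) = bform x y) ∧ φ v = w) ↔
      (bform v v = bform w w ∧ dv = dw) := by
  change SameOrbit Theta.form v w ↔ Theta.form v v = Theta.form w w ∧ dv = dw
  refine ⟨fun h => ⟨h.apply_self_eq.symm, (hdv.of_sameOrbit h).unique hdw⟩, ?_⟩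
  rintro ⟨hq, rfl⟩
  obtain ⟨hd, B, hvB⟩ := Theta.exists_sameOrbit_canonical hv hdv
  obtain ⟨-, B', hwB'⟩ := Theta.exists_sameOrbit_canonical hw hdw
  have hBB' := hvB.apply_self_eq.trans (hq.trans hwB'.apply_self_eq.symm)
  rw [Theta.form_canonical_self, Theta.form_canonical_self] at hBB'
  obtain rfl : B = B' := mul_left_cancel₀ (show (2 * dv : ℤ) ≠ 0 by omega) (by linarith)
  exact hvB.trans hwB'.symm

/-- Eichler/Nikulin criterion for the lattice `Θ = U³ ⊕ E₈(−1)² ⊕ ⟨−2⟩`: two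
primitive nonzero vectors `v, w` lie in the same orbit of the isometry group
`O(Θ)` if and only if `q(v) = q(w)` and `div(v) = div(w)`. -/
theorem theta_orbit_iff_square_and_div (v w : Theta)
    (hv : ThetaPrimitive v) (hw : ThetaPrimitive w)
    (hv0 : v ≠ 0) (hw0 : w ≠ 0)
    (dv dw : ℕ) (hdv : IsDiv v dv) (hdw : IsDiv w dw) :
    (∃ φ : Theta ≃ₗ[ℤ] Theta,
        (∀ x y : Theta, bform (φ x) (φ y) = bform x y) ∧ φ v = w) ↔
      (bform v v = bform w w ∧ dv = dw) :=
  theta_orbit_iff_square_and_div_general v w hv hw dv dw hdv hdw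
end
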